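/- Let $\sigma_1,\dots,\sigma_m$ be weights, $1<p_i<\infty$, $\frac1p=\sum_i\frac1{p_i}$, and suppose $[\vec\sigma]_{W^\infty_{\vec P}}<\infty$. Then for every dyadic cube $R$ and every sparse subfamily $\{Q_j^k\}$ of dyadic cubes contained in $R$, $\sum_{Q_j^k\subset R}\prod_{i=1}^m\sigma_i(Q_j^k)^{p/p_i}\le 2[\vec\sigma]_{W^\infty_{\vec P}}\int_R\prod_{i=1}^m\sigma_i^{p/p_i}\,dx$. -/

import Mathlib

open MeasureTheory ENNReal

noncomputable section

/-- Points of `ℝⁿ`. -/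
abbrev Rn (n : ℕ) := Fin n → ℝ

/-- The half-open cube with corner `c` and sidelength `h`. -/
def cube {n : ℕ} (c : Rn n) (h : ℝ) : Set (Rn n) :=
  Set.univ.pi fun i => Set.Ico (c i) (c i + h)

/-- `Q` is a (half-open, axis-parallel) cube. -/
def IsCube {n : ℕ} (Q : Set (Rn n)) : Prop := ∃ c h, 0 < h ∧ Q = cube c h

/-- The dyadic cube `2^{-k}([0,1)^n + j)` of the standard dyadic grid. -/
def dyadicCube {n : ℕ} (k : ℤ) (j : Fin n → ℤ) : Set (Rn n) :=
  cube (fun i => (j i : ℝ) * (2:ℝ) ^ (-k)) ((2:ℝ) ^ (-k))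

/-- `Q` belongs to the standard dyadic grid `𝒟`. -/
def IsDyadicCube {n : ℕ} (Q : Set (Rn n)) : Prop := ∃ k j, Q = dyadicCube k j

/-- `∫_Q g` of a (nonnegative) real function, as an element of `ℝ≥0∞`. -/
def setInt {n : ℕ} (Q : Set (Rn n)) (g : Rn n → ℝ) : ℝ≥0∞ :=
  ∫⁻ x in Q, ENNReal.ofReal (g x)

/-- The average `(1/|Q|)∫_Q g`. -/
def avg {n : ℕ} (Q : Set (Rn n)) (g : Rn n → ℝ) : ℝ≥0∞ := setInt Q g / volume Q

/-- The weighted average `(1/σ(Q)) ∫_Q f σ`. -/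
def wAvg {n : ℕ} (Q : Set (Rn n)) (σ f : Rn n → ℝ) : ℝ≥0∞ :=
  setInt Q (fun x => f x * σ x) / setInt Q σ

/-- The dyadic weighted multisublinear maximal operator `𝓜^d_{⃗σ}`. -/
def Mdw {n m : ℕ} (σ f : Fin m → Rn n → ℝ) (x : Rn n) : ℝ≥0∞ :=
  ⨆ (Q : Set (Rn n)) (_ : IsDyadicCube Q) (_ : x ∈ Q), ∏ i, wAvg Q (σ i) (f i)

/-- The dyadic weighted maximal operator `M^d_σ`. -/
def Mdw1 {n : ℕ} (σ f : Rn n → ℝ) (x : Rn n) : ℝ≥0∞ :=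
  ⨆ (Q : Set (Rn n)) (_ : IsDyadicCube Q) (_ : x ∈ Q), wAvg Q σ f

/-- The multisublinear maximal operator `𝓜` over all cubes. -/
def MM {n m : ℕ} (f : Fin m → Rn n → ℝ) (x : Rn n) : ℝ≥0∞ :=
  ⨆ (Q : Set (Rn n)) (_ : IsCube Q) (_ : x ∈ Q), ∏ i, avg Q (f i)

/-- The dyadic multisublinear maximal operator `𝓜^d`. -/
def MMd {n m : ℕ} (f : Fin m → Rn n → ℝ) (x : Rn n) : ℝ≥0∞ :=
  ⨆ (Q : Set (Rn n)) (_ : IsDyadicCube Q) (_ : x ∈ Q), ∏ i, avg Q (f i)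

/-- The Hardy–Littlewood maximal operator (over all cubes). -/
def HLM {n : ℕ} (g : Rn n → ℝ) (x : Rn n) : ℝ≥0∞ :=
  ⨆ (Q : Set (Rn n)) (_ : IsCube Q) (_ : x ∈ Q), avg Q g

/-- `(∫ g^p v dx)^{1/p}` for an `ℝ≥0∞`-valued `g`. -/
def nLp {n : ℕ} (p : ℝ) (v : Rn n → ℝ) (g : Rn n → ℝ≥0∞) : ℝ≥0∞ :=
  (∫⁻ x, g x ^ p * ENNReal.ofReal (v x)) ^ (1/p)

/-- The `L^p(v)` norm of a (nonnegative) real function. -/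
def nLpR {n : ℕ} (p : ℝ) (v f : Rn n → ℝ) : ℝ≥0∞ :=
  nLp p v (fun x => ENNReal.ofReal (f x))

/-- The conjugate exponent `q' = q/(q-1)`. -/
def conjExp (q : ℝ) : ℝ := q / (q - 1)

/-- The dual weights `σ_i = w_i^{1-p_i'}`. -/
def dualW {n m : ℕ} (p : Fin m → ℝ) (w : Fin m → Rn n → ℝ) : Fin m → Rn n → ℝ :=
  fun i x => w i x ^ (1 - conjExp (p i))

/-- The geometric average `exp((1/|Q|)∫_Q log g)`, realized (in the extended sense)
as `inf_{r>0} ((1/|Q|)∫_Q g^r)^{1/r}`. -/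
def expLogAvg {n : ℕ} (Q : Set (Rn n)) (g : Rn n → ℝ) : ℝ≥0∞ :=
  ⨅ (r : ℝ) (_ : 0 < r), ((∫⁻ x in Q, ENNReal.ofReal (g x) ^ r) / volume Q) ^ (1/r)

/-- A sparse family of cubes indexed by `ℤ × J`. -/
def IsSparse {n : ℕ} (J : Type) (Q : ℤ → J → Set (Rn n)) : Prop :=
  (∀ (k : ℤ) (j j' : J), j ≠ j' → Q k j ∩ Q k j' = ∅) ∧
  (∀ k : ℤ, (⋃ j, Q (k+1) j) ⊆ ⋃ j, Q k j) ∧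
  (∀ (k : ℤ) (j : J), volume ((⋃ j', Q (k+1) j') ∩ Q k j) ≤ volume (Q k j) / 2)

/-- A general dyadic grid. -/
def IsDyadicGrid {n : ℕ} (G : Set (Set (Rn n))) : Prop :=
  (∀ Q ∈ G, ∃ (k : ℤ) (c : Rn n), Q = cube c ((2:ℝ) ^ k)) ∧
  (∀ Q ∈ G, ∀ R ∈ G, Q ∩ R = Q ∨ Q ∩ R = R ∨ Q ∩ R = ∅) ∧
  (∀ k : ℤ,
    ⋃₀ {Q | Q ∈ G ∧ ∃ c, Q = cube c ((2:ℝ) ^ k)} = Set.univ ∧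
    {Q | Q ∈ G ∧ ∃ c, Q = cube c ((2:ℝ) ^ k)}.Pairwise fun Q R => Q ∩ R = ∅)

/-
For a cube `Q ⊆ R` and `x ∈ Q`, the average `σᵢ(Q)/|Q|` is at most
`M(σᵢ χ_R)(x)`. Since `∑ pp/pᵢ = 1`, this gives
`∏ σᵢ(Q)^{pp/pᵢ} = |Q| ∏ (σᵢ(Q)/|Q|)^{pp/pᵢ} ≤ 2 ∫_{E_Q} ∏ M(σᵢ χ_R)^{pp/pᵢ}`,
where `E_Q` is the part of `Q` not covered by the next generation, which has at least half
the measure of `Q` by sparseness. The sets `E_Q` are pairwise disjoint and lie in `R`, so summing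
and applying the `W^∞` condition on `R` gives the bound.
-/

open Function

lemma measurableSet_cube {n : ℕ} (c : Rn n) (h : ℝ) : MeasurableSet (cube c h) :=
  MeasurableSet.univ_pi fun _ => measurableSet_Ico

lemma volume_cube {n : ℕ} (c : Rn n) (h : ℝ) : volume (cube c h) = ENNReal.ofReal h ^ n := by
  simp [cube, volume_pi_pi, Real.volume_Ico]

namespace IsCube

variable {n : ℕ} {Q : Set (Rn n)}

lemma measurableSet (hQ : IsCube Q) : MeasurableSet Q := by
  obtain ⟨c, h, -, rfl⟩ := hQ
  exact measurableSet_cube c h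

lemma volume_ne_zero (hQ : IsCube Q) : volume Q ≠ 0 := by
  obtain ⟨c, h, hh, rfl⟩ := hQ
  rw [volume_cube]
  exact pow_ne_zero _ (ENNReal.ofReal_pos.mpr hh).ne'

lemma volume_ne_top (hQ : IsCube Q) : volume Q ≠ ⊤ := by
  obtain ⟨c, h, -, rfl⟩ := hQ
  rw [volume_cube]
  exact ENNReal.pow_ne_top ENNReal.ofReal_ne_top

end IsCube

lemma IsDyadicCube.isCube {n : ℕ} {Q : Set (Rn n)} (hQ : IsDyadicCube Q) : IsCube Q := by
  obtain ⟨k, j, rfl⟩ := hQ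
  exact ⟨_, _, by positivity, rfl⟩

lemma countable_setOf_isDyadicCube (n : ℕ) : {Q : Set (Rn n) | IsDyadicCube Q}.Countable := by
  refine (Set.countable_range fun kj : ℤ × (Fin n → ℤ) => dyadicCube kj.1 kj.2).mono ?_
  rintro _ ⟨k, j, rfl⟩
  exact ⟨(k, j), rfl⟩

lemma measurableSet_iUnion_of_isDyadicCube {n : ℕ} {J : Type} {Q : J → Set (Rn n)}
    (hQ : ∀ j, Q j = ∅ ∨ IsDyadicCube (Q j)) : MeasurableSet (⋃ j, Q j) := by
  rw [← Set.sUnion_range]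
  refine MeasurableSet.sUnion ((countable_setOf_isDyadicCube n).insert ∅ |>.mono ?_) ?_
  · rintro _ ⟨j, rfl⟩
    exact hQ j
  · rintro _ ⟨j, rfl⟩
    rcases hQ j with h | h
    · exact h ▸ MeasurableSet.empty
    · exact h.isCube.measurableSet

lemma ENNReal.rpow_sum_of_nonneg {ι : Type*} (v : ℝ≥0∞) {s : Finset ι} {A : ι → ℝ}
    (hA : ∀ i ∈ s, 0 ≤ A i) : v ^ (∑ i ∈ s, A i) = ∏ i ∈ s, v ^ A i := by
  classical
  induction s using Finset.induction_on with
  | empty => simp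
  | insert a s ha ih =>
    rw [Finset.sum_insert ha, Finset.prod_insert ha,
      ENNReal.rpow_add_of_nonneg _ _ (hA a (s.mem_insert_self a))
        (Finset.sum_nonneg fun i hi => hA i (Finset.mem_insert_of_mem hi)),
      ih fun i hi => hA i (Finset.mem_insert_of_mem hi)]

lemma ENNReal.prod_rpow_eq_prod_div_rpow_mul {ι : Type*} [Fintype ι] {A : ι → ℝ}
    (hA : ∀ i, 0 ≤ A i) (hA1 : ∑ i, A i = 1) (a : ι → ℝ≥0∞) {v : ℝ≥0∞}
    (hv0 : v ≠ 0) (hvtop : v ≠ ⊤) : ∏ i, a i ^ A i = (∏ i, (a i / v) ^ A i) * v := calc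
  ∏ i, a i ^ A i = ∏ i, (a i / v) ^ A i * v ^ A i := by
    refine Finset.prod_congr rfl fun i _ => ?_
    rw [← ENNReal.mul_rpow_of_nonneg _ _ (hA i), ENNReal.div_mul_cancel hv0 hvtop]
  _ = (∏ i, (a i / v) ^ A i) * v := by
    rw [Finset.prod_mul_distrib, ← ENNReal.rpow_sum_of_nonneg v fun i _ => hA i, hA1,
      ENNReal.rpow_one]

lemma avg_le_HLM {n : ℕ} {Q : Set (Rn n)} (hQ : IsCube Q) {x : Rn n} (hx : x ∈ Q)
    (g : Rn n → ℝ) : avg Q g ≤ HLM g x :=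
  le_iSup_of_le Q <| le_iSup_of_le hQ <| le_iSup_of_le hx le_rfl

lemma avg_indicator_of_subset {n : ℕ} {Q R : Set (Rn n)} (hQ : MeasurableSet Q) (hQR : Q ⊆ R)
    (g : Rn n → ℝ) : avg Q (R.indicator g) = avg Q g := by
  rw [avg, avg, setInt, setInt]
  congr 1
  exact setLIntegral_congr_fun hQ fun y hy => by rw [Set.indicator_of_mem (hQR hy)]

lemma prod_setInt_rpow_le_two_mul_setLIntegral {n : ℕ} {ι : Type*} [Fintype ι] {A : ι → ℝ}
    (hA : ∀ i, 0 ≤ A i) (hA1 : ∑ i, A i = 1) (σ : ι → Rn n → ℝ) {R Q E : Set (Rn n)}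
    (hQ : Q = ∅ ∨ IsCube Q) (hQR : Q ⊆ R) (hE : MeasurableSet E) (hEQ : E ⊆ Q)
    (hvol : volume Q ≤ 2 * volume E) :
    ∏ i, setInt Q (σ i) ^ A i ≤
      2 * ∫⁻ x in E, ∏ i, HLM (R.indicator (σ i)) x ^ A i := by
  rcases hQ with rfl | hQ
  · obtain ⟨i, -, hi⟩ := Finset.exists_ne_zero_of_sum_ne_zero (hA1.trans_ne one_ne_zero)
    have hzero : setInt ∅ (σ i) ^ A i = 0 := by
      simp [setInt, ENNReal.zero_rpow_of_pos ((hA i).lt_of_ne' hi)]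
    rw [Finset.prod_eq_zero (Finset.mem_univ i) hzero]
    exact zero_le
  have havg : ∀ x ∈ E, ∀ i, setInt Q (σ i) / volume Q ≤ HLM (R.indicator (σ i)) x :=
    fun x hx i => by
      rw [← avg, ← avg_indicator_of_subset hQ.measurableSet hQR]
      exact avg_le_HLM hQ (hEQ hx) _
  calc ∏ i, setInt Q (σ i) ^ A i
      = (∏ i, (setInt Q (σ i) / volume Q) ^ A i) * volume Q :=
        ENNReal.prod_rpow_eq_prod_div_rpow_mul hA hA1 _ hQ.volume_ne_zero hQ.volume_ne_top
    _ ≤ (∏ i, (setInt Q (σ i) / volume Q) ^ A i) * (2 * volume E) := by gcongr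
    _ = 2 * ∫⁻ _ in E, ∏ i, (setInt Q (σ i) / volume Q) ^ A i := by
        rw [setLIntegral_const]; ring
    _ ≤ 2 * ∫⁻ x in E, ∏ i, HLM (R.indicator (σ i)) x ^ A i := by
        gcongr 2 * ?_
        refine setLIntegral_mono' hE fun x hx => ?_
        exact Finset.prod_le_prod' fun i _ => ENNReal.rpow_le_rpow (havg x hx i) (hA i)

lemma tsum_le_mul_setLIntegral_of_pairwise_disjoint {α ι : Type*} [MeasurableSpace α]
    {μ : Measure α} [SFinite μ] {a : ι → ℝ≥0∞} {E : ι → Set α} {R : Set α}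
    {C : ℝ≥0∞} {g : α → ℝ≥0∞} (hE : ∀ i, MeasurableSet (E i))
    (hdisj : Pairwise (Disjoint on E))
    (hER : ∀ i, E i ⊆ R) (ha : ∀ i, a i ≤ C * ∫⁻ x in E i, g x ∂μ) :
    ∑' i, a i ≤ C * ∫⁻ x in R, g x ∂μ := calc
  ∑' i, a i ≤ C * ∑' i, μ.withDensity g (E i) := by
    rw [← ENNReal.tsum_mul_left]
    exact ENNReal.tsum_le_tsum fun i => by rw [withDensity_apply' _ _]; exact ha i
  _ ≤ C * μ.withDensity g R := by
    gcongr
    exact (tsum_meas_le_meas_iUnion_of_disjoint _ hE hdisj).trans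
      (measure_mono (Set.iUnion_subset hER))
  _ = C * ∫⁻ x in R, g x ∂μ := by rw [withDensity_apply' _ _]

/-- The paper's `E_j^k = Q_j^k \ Ω_{k+1}`. -/
def sparsePart {n : ℕ} {J : Type} (Q : ℤ → J → Set (Rn n)) (k : ℤ) (j : J) : Set (Rn n) :=
  Q k j \ ⋃ j', Q (k + 1) j'

namespace IsSparse

variable {n : ℕ} {J : Type} {Q : ℤ → J → Set (Rn n)}

lemma iUnion_subset_iUnion_of_le (hQ : IsSparse J Q) {k k' : ℤ} (hk : k ≤ k') :
    ⋃ j, Q k' j ⊆ ⋃ j, Q k j := by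
  induction k', hk using Int.leInduction with
  | base => exact subset_rfl
  | succ a _ ih => exact (hQ.2.1 a).trans ih

lemma pairwise_disjoint_sparsePart (hQ : IsSparse J Q) :
    Pairwise (Disjoint on fun kj : ℤ × J => sparsePart Q kj.1 kj.2) := by
  have of_lt : ∀ a b : ℤ × J, a.1 < b.1 →
      Disjoint (sparsePart Q a.1 a.2) (sparsePart Q b.1 b.2) :=
    fun a b hab => Set.disjoint_left.mpr fun x hxa hxb => hxa.2 <|
      hQ.iUnion_subset_iUnion_of_le (Int.add_one_le_of_lt hab) (Set.mem_iUnion_of_mem _ hxb.1)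
  rintro ⟨k, j⟩ ⟨k', j'⟩ hne
  rcases lt_trichotomy k k' with h | rfl | h
  · exact of_lt _ _ h
  · have hj : j ≠ j' := fun h => hne (by rw [h])
    exact Set.disjoint_iff_inter_eq_empty.mpr <| Set.subset_eq_empty
      (Set.inter_subset_inter Set.sdiff_subset Set.sdiff_subset) (hQ.1 k j j' hj)
  · exact (of_lt _ _ h).symm

lemma volume_le_two_mul_volume_sparsePart (hQ : IsSparse J Q) {k : ℤ} {j : J}
    (hfin : volume (Q k j) ≠ ⊤) : volume (Q k j) ≤ 2 * volume (sparsePart Q k j) := by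
  have hcover : volume (Q k j) ≤ volume (sparsePart Q k j) + volume (Q k j) / 2 := calc
    volume (Q k j) ≤ volume (sparsePart Q k j ∪ ((⋃ j', Q (k + 1) j') ∩ Q k j)) :=
        measure_mono fun x hx => by
          by_cases hx' : x ∈ ⋃ j', Q (k + 1) j'
          · exact Or.inr ⟨hx', hx⟩
          · exact Or.inl ⟨hx, hx'⟩
    _ ≤ volume (sparsePart Q k j) + volume ((⋃ j', Q (k + 1) j') ∩ Q k j) :=
        measure_union_le _ _
    _ ≤ volume (sparsePart Q k j) + volume (Q k j) / 2 := by gcongr; exact hQ.2.2 k j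
  have hhalf : volume (Q k j) / 2 ≤ volume (sparsePart Q k j) := by
    rw [← ENNReal.add_le_add_iff_right (ENNReal.div_ne_top hfin two_ne_zero), ENNReal.add_halves]
    exact hcover
  rwa [ENNReal.div_le_iff two_ne_zero ENNReal.ofNat_ne_top, mul_comm] at hhalf

end IsSparse

lemma sum_div_eq_one_of_one_div_eq_sum {ι : Type*} [Fintype ι] [Nonempty ι] {p : ι → ℝ}
    (hp : ∀ i, 0 < p i) {pp : ℝ} (hpp : 1 / pp = ∑ i, 1 / p i) :
    0 < pp ∧ ∑ i, pp / p i = 1 := by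
  have hpos : 0 < 1 / pp :=
    hpp ▸ Finset.sum_pos (fun i _ => one_div_pos.mpr (hp i)) Finset.univ_nonempty
  have hpp0 : 0 < pp := one_div_pos.mp hpos
  refine ⟨hpp0, ?_⟩
  simp_rw [div_eq_mul_one_div pp]
  rw [← Finset.mul_sum, ← hpp, mul_one_div_cancel hpp0.ne']

theorem stmt17_general {n m : ℕ} (hm : 0 < m) (p : Fin m → ℝ) (pp : ℝ)
    (hp : ∀ i, 1 < p i) (hpp : 1 / pp = ∑ i, 1 / p i)
    (σ : Fin m → Rn n → ℝ)
    (W : ℝ≥0∞)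
    (hW : ∀ Q : Set (Rn n), IsCube Q →
      (∫⁻ x in Q, ∏ i, HLM (Set.indicator Q (σ i)) x ^ (pp / p i)) ≤
        W * setInt Q fun x => ∏ i, σ i x ^ (pp / p i))
    (R : Set (Rn n)) (hR : IsDyadicCube R)
    {J : Type} (Q : ℤ → J → Set (Rn n))
    (hQd : ∀ k j, Q k j = ∅ ∨ IsDyadicCube (Q k j))
    (hQR : ∀ k j, Q k j ⊆ R)
    (hsparse : IsSparse J Q) :
    (∑' kj : ℤ × J, ∏ i, setInt (Q kj.1 kj.2) (σ i) ^ (pp / p i)) ≤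
      2 * W * setInt R fun x => ∏ i, σ i x ^ (pp / p i) := by
  have : Nonempty (Fin m) := ⟨⟨0, hm⟩⟩
  obtain ⟨hpp0, hA1⟩ := sum_div_eq_one_of_one_div_eq_sum (fun i => one_pos.trans (hp i)) hpp
  have hA : ∀ i, 0 ≤ pp / p i := fun i => (div_pos hpp0 (one_pos.trans (hp i))).le
  have hQ : ∀ k j, Q k j = ∅ ∨ IsCube (Q k j) := fun k j =>
    (hQd k j).imp_right IsDyadicCube.isCube
  have hmeas : ∀ kj : ℤ × J, MeasurableSet (sparsePart Q kj.1 kj.2) := fun ⟨k, j⟩ =>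
    ((hQ k j).elim (fun h => h ▸ MeasurableSet.empty) IsCube.measurableSet).diff
      (measurableSet_iUnion_of_isDyadicCube (hQd (k + 1)))
  have hfin : ∀ k j, volume (Q k j) ≠ ⊤ := fun k j =>
    (hQ k j).elim (fun h => by simp [h]) IsCube.volume_ne_top
  have hterm : ∀ kj : ℤ × J, ∏ i, setInt (Q kj.1 kj.2) (σ i) ^ (pp / p i) ≤
      2 * ∫⁻ x in sparsePart Q kj.1 kj.2, ∏ i, HLM (R.indicator (σ i)) x ^ (pp / p i) :=
    fun ⟨k, j⟩ => prod_setInt_rpow_le_two_mul_setLIntegral hA hA1 σ (hQ k j) (hQR k j)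
      (hmeas (k, j)) Set.sdiff_subset (hsparse.volume_le_two_mul_volume_sparsePart (hfin k j))
  calc (∑' kj : ℤ × J, ∏ i, setInt (Q kj.1 kj.2) (σ i) ^ (pp / p i))
      ≤ 2 * ∫⁻ x in R, ∏ i, HLM (R.indicator (σ i)) x ^ (pp / p i) :=
        tsum_le_mul_setLIntegral_of_pairwise_disjoint hmeas hsparse.pairwise_disjoint_sparsePart
          (fun kj => Set.sdiff_subset.trans (hQR _ _)) hterm
    _ ≤ 2 * W * setInt R fun x => ∏ i, σ i x ^ (pp / p i) := by
        rw [mul_assoc]; exact mul_le_mul_right (hW R hR.isCube) 2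

/-- The Carleson condition for `a_Q = ∏ σ_i(Q)^{p/p_i}` from the `W^∞_{⃗P}` constant. -/
theorem stmt17 {n m : ℕ} (hm : 0 < m) (p : Fin m → ℝ) (pp : ℝ)
    (hp : ∀ i, 1 < p i) (hpp : 1 / pp = ∑ i, 1 / p i)
    (σ : Fin m → Rn n → ℝ) (hσ0 : ∀ i x, 0 ≤ σ i x) (hσm : ∀ i, Measurable (σ i))
    (W : ℝ≥0∞)
    (hW : ∀ Q : Set (Rn n), IsCube Q →
      (∫⁻ x in Q, ∏ i, HLM (Set.indicator Q (σ i)) x ^ (pp / p i)) ≤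
        W * setInt Q fun x => ∏ i, σ i x ^ (pp / p i))
    (R : Set (Rn n)) (hR : IsDyadicCube R)
    {J : Type} (Q : ℤ → J → Set (Rn n))
    (hQd : ∀ k j, Q k j = ∅ ∨ IsDyadicCube (Q k j))
    (hQR : ∀ k j, Q k j ⊆ R)
    (hsparse : IsSparse J Q) :
    (∑' kj : ℤ × J, ∏ i, setInt (Q kj.1 kj.2) (σ i) ^ (pp / p i)) ≤
      2 * W * setInt R fun x => ∏ i, σ i x ^ (pp / p i) :=
  stmt17_general hm p pp hp hpp σ W hW R hR Q hQd hQR hsparse
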